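/- Let w = w₁⋯w_m be a word of length m with letters in {1,…,N}, write S_w = S_{w₁} ∘ ⋯ ∘ S_{w_m}, and let 1 ≤ j < k ≤ N. Then there exists a continuous path γ : [0,1] → ℝ^N with image contained in X, γ(0) = S_w(p_j), γ(1) = S_w(p_k), and length eVariationOn γ [0,1] ≤ 2·(N/(N+2))^m; moreover ‖S_w(p_j) − S_w(p_k)‖ ≥ (N+2)^{−m}, so every such path has length at least (N+2)^{−m}. (Quantitative form of Corollary 2.10.) -/

import Mathlib

open Set Filter

noncomputable section

abbrev E (N : ℕ) := EuclideanSpace ℝ (Fin N)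

/-- Vertex `p_j` of the regular simplex. -/
def gPt (N : ℕ) (j : Fin N) : E N :=
  (Real.sqrt 2)⁻¹ • (EuclideanSpace.single j (1 : ℝ) -
    (N : ℝ)⁻¹ • ∑ i : Fin N, EuclideanSpace.single i (1 : ℝ))

/-- The affine map `S_j`. -/
def gS (N : ℕ) (j : Fin N) (x : E N) : E N :=
  ((N : ℝ) + 2)⁻¹ • x +
    (((N : ℝ) + 2)⁻¹ * (2 + ((N : ℝ) - 1) * (inner ℝ x (gPt N j) : ℝ) / ‖gPt N j‖ ^ 2)) • gPt N j

/-- `S_w = S_{w₁} ∘ ⋯ ∘ S_{w_m}` for a word `w` with letters in `{1,…,N}`. -/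
def gSlist (N : ℕ) : List (Fin N) → (E N → E N)
  | [] => id
  | i :: t => gS N i ∘ gSlist N t

/-!
In coordinates on the plane through `0`, `p_j`, `p_k` in which `p_j = (-1, 0)` and
`p_k = (0, 1)`, the maps `S_j` and `S_k` act as affine contractions of `ℝ²` that are monotone
for the product order. De Rham's construction (the fixed point of "run `S_j ∘ γ`, then `S_k ∘ γ`")
therefore yields a curve from `p_j` to `p_k` that is monotone in both coordinates; since
`‖p_a‖ ≤ 1`, its length is at most the total increase `2` of the two coordinates. Its image is a
compact set covered by its own images under the `S_a`, which contract by `N/(N+2)` and preserve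
`X`, so even its point farthest from `X` lies in `X`. Transporting the curve by `S_w`
multiplies lengths by at most `(N/(N+2))^m`.

For the lower bound, `S_a x - S_a y` is `(N+2)⁻¹` times `x - y` with its component along `p_a`
stretched by `N`, so each `S_a` shrinks distances by at most `N+2`, and `‖p_j - p_k‖ = 1`.
-/

open scoped NNReal RealInnerProductSpace

section Variation

variable {α M M' : Type*} [LinearOrder α]

theorem eVariationOn.le_of_edist_le [PseudoEMetricSpace M] [PseudoEMetricSpace M']
    {f : α → M} {g : α → M'} {s : Set α}
    (h : ∀ ⦃x⦄, x ∈ s → ∀ ⦃y⦄, y ∈ s → edist (f x) (f y) ≤ edist (g x) (g y)) :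
    eVariationOn f s ≤ eVariationOn g s :=
  iSup_le fun ⟨_, _, hu, us⟩ ↦
    (Finset.sum_le_sum fun i _ ↦ h (us (i + 1)) (us i)).trans (eVariationOn.sum_le hu us)

theorem eVariationOn_Icc_le_of_dist_le_sub [PseudoMetricSpace M] {f : α → M}
    {V : α → ℝ} {a b : α} (hab : a ≤ b)
    (h : ∀ x ∈ Icc a b, ∀ y ∈ Icc a b, x ≤ y → dist (f x) (f y) ≤ V y - V x) :
    eVariationOn f (Icc a b) ≤ ENNReal.ofReal (V b - V a) := by
  have hV : MonotoneOn V (Icc a b) := fun x hx y hy hxy ↦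
    sub_nonneg.1 (dist_nonneg.trans (h x hx y hy hxy))
  have hfV : ∀ x ∈ Icc a b, ∀ y ∈ Icc a b, x ≤ y → edist (f x) (f y) ≤ edist (V x) (V y) := by
    intro x hx y hy hxy
    rw [edist_dist, edist_dist, Real.dist_eq, abs_sub_comm,
      abs_of_nonneg (sub_nonneg.2 (hV hx hy hxy))]
    exact ENNReal.ofReal_le_ofReal (h x hx y hy hxy)
  calc eVariationOn f (Icc a b) ≤ eVariationOn V (Icc a b) := by
        refine eVariationOn.le_of_edist_le fun x hx y hy ↦ ?_
        rcases le_total x y with hxy | hyx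
        · exact hfV x hx y hy hxy
        · rw [edist_comm, edist_comm (V x)]; exact hfV y hy x hx hyx
    _ = ENNReal.ofReal (V b - V a) := by
        simpa using hV.eVariationOn_eq (left_mem_Icc.2 hab) (right_mem_Icc.2 hab)

end Variation

theorem Path.monotone_trans {P : Type*} [TopologicalSpace P] [Preorder P] {x y z : P}
    {γ : Path x y} {γ' : Path y z} (hγ : Monotone γ) (hγ' : Monotone γ') :
    Monotone (γ.trans γ') := by
  intro s t hst
  have hst' : (s : ℝ) ≤ t := hst
  simp only [Path.trans_apply]
  split_ifs with hs ht ht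
  · exact hγ (Subtype.mk_le_mk.2 (by linarith))
  · calc γ _ ≤ γ 1 := hγ unitInterval.le_one'
      _ = γ' 0 := γ.target.trans γ'.source.symm
      _ ≤ γ' _ := hγ' unitInterval.nonneg'
  · linarith
  · exact hγ' (Subtype.mk_le_mk.2 (by linarith))

section SelfSimilarPath

variable {P : Type*} [MetricSpace P] {f₀ f₁ : P → P} {a b : P}

/-- One step of de Rham's construction of self-similar curves. -/
def Path.selfSimilarStep (hf₀ : Continuous f₀) (hf₁ : Continuous f₁) (ha : f₀ a = a)
    (hb : f₁ b = b) (hab : f₀ b = f₁ a) (γ : Path a b) : Path a b :=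
  ((γ.map hf₀).cast ha.symm rfl).trans ((γ.map hf₁).cast hab hb.symm)

theorem Path.selfSimilarStep_apply (hf₀ : Continuous f₀) (hf₁ : Continuous f₁) (ha : f₀ a = a)
    (hb : f₁ b = b) (hab : f₀ b = f₁ a) (γ : Path a b) (t : unitInterval) :
    γ.selfSimilarStep hf₀ hf₁ ha hb hab t =
      if h : (t : ℝ) ≤ 1 / 2 then
        f₀ (γ ⟨2 * t, (unitInterval.mul_pos_mem_iff zero_lt_two).2 ⟨t.2.1, h⟩⟩)
      else f₁ (γ ⟨2 * t - 1, unitInterval.two_mul_sub_one_mem_iff.2 ⟨(not_le.1 h).le, t.2.2⟩⟩) :=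
  Path.trans_apply _ _ t

theorem Path.exists_dist_selfSimilarStep_le {K : ℝ≥0} (hf₀ : LipschitzWith K f₀)
    (hf₁ : LipschitzWith K f₁) (ha : f₀ a = a) (hb : f₁ b = b) (hab : f₀ b = f₁ a)
    (γ γ' : Path a b) (t : unitInterval) :
    ∃ s, dist (γ.selfSimilarStep hf₀.continuous hf₁.continuous ha hb hab t)
      (γ'.selfSimilarStep hf₀.continuous hf₁.continuous ha hb hab t) ≤ K * dist (γ s) (γ' s) := by
  simp only [Path.selfSimilarStep_apply]
  split_ifs
  exacts [⟨_, hf₀.dist_le_mul _ _⟩, ⟨_, hf₁.dist_le_mul _ _⟩]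

theorem ContinuousMap.isClosed_setOf_monotone {α β : Type*} [TopologicalSpace α] [Preorder α]
    [TopologicalSpace β] [Preorder β] [OrderClosedTopology β] :
    IsClosed {f : C(α, β) | Monotone f} := by
  have : {f : C(α, β) | Monotone f} = ⋂ (x : α) (y : α) (_ : x ≤ y), {f | f x ≤ f y} := by
    ext f; simp only [mem_ofPred_eq, mem_iInter]; rfl
  rw [this]
  exact isClosed_iInter fun x ↦ isClosed_iInter fun y ↦ isClosed_iInter fun _ ↦
    isClosed_le (continuous_eval_const x) (continuous_eval_const y)

theorem Path.exists_monotone_selfSimilarStep_eq [CompleteSpace P] [PartialOrder P]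
    [OrderClosedTopology P] {K : ℝ≥0} (hK : K < 1) (hf₀ : LipschitzWith K f₀)
    (hf₁ : LipschitzWith K f₁) (hm₀ : Monotone f₀) (hm₁ : Monotone f₁) (ha : f₀ a = a)
    (hb : f₁ b = b) (hab : f₀ b = f₁ a) (γ₀ : Path a b) (hγ₀ : Monotone γ₀) :
    ∃ γ : Path a b, Monotone γ ∧
      γ.selfSimilarStep hf₀.continuous hf₁.continuous ha hb hab = γ := by
  set step := Path.selfSimilarStep hf₀.continuous hf₁.continuous ha hb hab
  let S : Set C(unitInterval, P) := {c | c 0 = a ∧ c 1 = b ∧ Monotone c}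
  have hS : IsClosed S := (isClosed_eq (continuous_eval_const 0) continuous_const).inter
    ((isClosed_eq (continuous_eval_const 1) continuous_const).inter
      ContinuousMap.isClosed_setOf_monotone)
  have := hS.isComplete.completeSpace_coe
  let toPath (c : S) : Path a b := ⟨c.1, c.2.1, c.2.2.1⟩
  let Φ (c : S) : S := ⟨step (toPath c), (step _).source, (step _).target,
    Path.monotone_trans (hm₀.comp c.2.2.2) (hm₁.comp c.2.2.2)⟩
  have hΦ : ContractingWith K Φ := by
    refine ⟨hK, LipschitzWith.of_dist_le_mul fun c c' ↦ ?_⟩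
    rw [Subtype.dist_eq, Subtype.dist_eq, ContinuousMap.dist_le (by positivity)]
    intro t
    obtain ⟨s, hs⟩ := Path.exists_dist_selfSimilarStep_le hf₀ hf₁ ha hb hab (toPath c) (toPath c') t
    exact hs.trans (by gcongr; exact ContinuousMap.dist_apply_le_dist s)
  obtain ⟨c, hc, -⟩ := hΦ.exists_fixedPoint ⟨γ₀, γ₀.source, γ₀.target, hγ₀⟩ (edist_ne_top _ _)
  exact ⟨toPath c, c.2.2.2, Path.ext (congrArg (fun c : S ↦ ⇑c.1) hc)⟩

end SelfSimilarPath

theorem IsCompact.subset_of_subset_iUnion_image {Y ι : Type*} [MetricSpace Y] {A X : Set Y}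
    {g : ι → Y → Y} {K : ℝ≥0} (hK : K < 1) (hg : ∀ i, LipschitzWith K (g i))
    (hgX : ∀ i, MapsTo (g i) X X) (hX : IsCompact X) (hXne : X.Nonempty) (hA : IsCompact A)
    (hAg : A ⊆ ⋃ i, g i '' A) : A ⊆ X := by
  have hd (i : ι) (y : Y) : Metric.infDist (g i y) X ≤ K * Metric.infDist y X := by
    obtain ⟨x, hx, hxy⟩ := hX.exists_infDist_eq_dist hXne y
    calc Metric.infDist (g i y) X ≤ dist (g i y) (g i x) :=
          Metric.infDist_le_dist_of_mem (hgX i hx)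
      _ ≤ K * dist y x := (hg i).dist_le_mul y x
      _ = K * Metric.infDist y X := by rw [hxy]
  rcases A.eq_empty_or_nonempty with rfl | hAne
  · exact empty_subset X
  obtain ⟨y₀, hy₀, hmax⟩ :=
    hA.exists_isMaxOn hAne (Metric.continuous_infDist_pt X).continuousOn
  have hy₀X : Metric.infDist y₀ X ≤ 0 := by
    obtain ⟨i, y, hy, hy₀y⟩ : ∃ i, ∃ y ∈ A, g i y = y₀ := by simpa using hAg hy₀
    have h₁ : Metric.infDist y X ≤ Metric.infDist y₀ X := hmax hy
    have h₂ := hd i y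
    rw [hy₀y] at h₂
    have hK' : (K : ℝ) < 1 := hK
    nlinarith [Metric.infDist_nonneg (x := y) (s := X), K.coe_nonneg]
  intro y hy
  rw [hX.isClosed.mem_iff_infDist_zero hXne]
  exact le_antisymm ((hmax hy).trans hy₀X) Metric.infDist_nonneg

section Stretch

variable {F : Type*} [NormedAddCommGroup F] [InnerProductSpace ℝ F]

theorem norm_add_smul_inner_sq (u p : F) (c : ℝ) :
    ‖u + (c * ⟪u, p⟫ / ‖p‖ ^ 2) • p‖ ^ 2 = ‖u‖ ^ 2 + (c ^ 2 + 2 * c) * (⟪u, p⟫ ^ 2 / ‖p‖ ^ 2) := by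
  rcases eq_or_ne p 0 with rfl | hp
  · simp
  have hp' : ‖p‖ ≠ 0 := norm_ne_zero_iff.2 hp
  rw [norm_add_sq_real, real_inner_smul_right, norm_smul, Real.norm_eq_abs, mul_pow, sq_abs]
  field_simp
  ring

theorem inner_sq_div_norm_sq_le (u p : F) : ⟪u, p⟫ ^ 2 / ‖p‖ ^ 2 ≤ ‖u‖ ^ 2 := by
  rcases eq_or_ne p 0 with rfl | hp
  · simp
  rw [div_le_iff₀ (pow_pos (norm_pos_iff.2 hp) 2), ← mul_pow, sq_le_sq, abs_mul, abs_norm,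
    abs_norm]
  exact abs_real_inner_le_norm u p

theorem norm_le_norm_add_smul_inner {c : ℝ} (hc : 0 ≤ c) (u p : F) :
    ‖u‖ ≤ ‖u + (c * ⟪u, p⟫ / ‖p‖ ^ 2) • p‖ := by
  rw [← sq_le_sq₀ (norm_nonneg _) (norm_nonneg _), norm_add_smul_inner_sq]
  have : 0 ≤ ⟪u, p⟫ ^ 2 / ‖p‖ ^ 2 := by positivity
  nlinarith

theorem norm_add_smul_inner_le {c : ℝ} (hc : 0 ≤ c) (u p : F) :
    ‖u + (c * ⟪u, p⟫ / ‖p‖ ^ 2) • p‖ ≤ (1 + c) * ‖u‖ := by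
  rw [← sq_le_sq₀ (norm_nonneg _) (by positivity), norm_add_smul_inner_sq]
  nlinarith [inner_sq_div_norm_sq_le u p]

end Stretch

variable {N : ℕ}

theorem inner_gPt (a b : Fin N) :
    ⟪gPt N a, gPt N b⟫ = ((if a = b then 1 else 0) - (N : ℝ)⁻¹) / 2 := by
  have hN : (N : ℝ) ≠ 0 := Nat.cast_ne_zero.2 a.pos.ne'
  let e (i : Fin N) : E N := EuclideanSpace.single i 1
  let one : E N := ∑ i, e i
  have hee (a b : Fin N) : ⟪e a, e b⟫ = if a = b then 1 else 0 := by
    simp [e, EuclideanSpace.inner_single_left, PiLp.single_apply]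
  have he1 (a : Fin N) : ⟪e a, one⟫ = 1 := by simp [one, inner_sum, hee]
  have h1e (a : Fin N) : ⟪one, e a⟫ = 1 := by rw [real_inner_comm, he1]
  have h11 : ⟪one, one⟫ = N := by
    calc ⟪one, one⟫ = ∑ i, ⟪e i, one⟫ := sum_inner _ _ _
      _ = N := by simp [he1]
  change ⟪(√2)⁻¹ • (e a - (N : ℝ)⁻¹ • one), (√2)⁻¹ • (e b - (N : ℝ)⁻¹ • one)⟫ = _
  simp only [real_inner_smul_left, real_inner_smul_right, inner_sub_left, inner_sub_right,
    hee, he1, h1e, h11]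
  field_simp
  rw [Real.sq_sqrt zero_le_two]
  ring

theorem norm_gPt_sq (a : Fin N) : ‖gPt N a‖ ^ 2 = ((N : ℝ) - 1) / (2 * N) := by
  have hN : (N : ℝ) ≠ 0 := Nat.cast_ne_zero.2 a.pos.ne'
  rw [← real_inner_self_eq_norm_sq, inner_gPt, if_pos rfl]
  field_simp

theorem norm_gPt_le_one (a : Fin N) : ‖gPt N a‖ ≤ 1 := by
  have hN : (0 : ℝ) < N := Nat.cast_pos.2 a.pos
  rw [← sq_le_one_iff₀ (norm_nonneg _), norm_gPt_sq, div_le_one (by positivity)]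
  linarith

theorem dist_gPt {j k : Fin N} (hjk : j ≠ k) : dist (gPt N j) (gPt N k) = 1 := by
  have hN : (N : ℝ) ≠ 0 := Nat.cast_ne_zero.2 j.pos.ne'
  rw [dist_eq_norm, ← sq_eq_sq₀ (norm_nonneg _) zero_le_one, norm_sub_sq_real, norm_gPt_sq,
    norm_gPt_sq, inner_gPt, if_neg hjk]
  field_simp
  ring

theorem gS_sub_gS (a : Fin N) (x y : E N) :
    gS N a x - gS N a y = ((N : ℝ) + 2)⁻¹ •
      ((x - y) + (((N : ℝ) - 1) * ⟪x - y, gPt N a⟫ / ‖gPt N a‖ ^ 2) • gPt N a) := by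
  simp only [gS, inner_sub_left, smul_add, smul_smul]
  match_scalars <;> ring

theorem lipschitzWith_gS (a : Fin N) : LipschitzWith ((N : ℝ≥0) / (N + 2)) (gS N a) := by
  have hN : (1 : ℝ) ≤ N := Nat.one_le_cast.2 a.pos
  refine LipschitzWith.of_dist_le_mul fun x y ↦ ?_
  rw [dist_eq_norm, dist_eq_norm, gS_sub_gS, norm_smul, Real.norm_of_nonneg (by positivity)]
  calc ((N : ℝ) + 2)⁻¹ * ‖x - y + (((N : ℝ) - 1) * ⟪x - y, gPt N a⟫ / ‖gPt N a‖ ^ 2) • gPt N a‖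
      ≤ ((N : ℝ) + 2)⁻¹ * ((1 + ((N : ℝ) - 1)) * ‖x - y‖) := by
        gcongr; exact norm_add_smul_inner_le (by linarith) _ _
    _ = _ := by push_cast; ring

theorem antilipschitzWith_gS (a : Fin N) : AntilipschitzWith (N + 2) (gS N a) := by
  have hN : (1 : ℝ) ≤ N := Nat.one_le_cast.2 a.pos
  refine AntilipschitzWith.of_le_mul_dist fun x y ↦ ?_
  rw [dist_eq_norm, dist_eq_norm, gS_sub_gS, norm_smul, Real.norm_of_nonneg (by positivity)]
  push_cast
  rw [mul_inv_cancel_left₀ (by positivity)]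
  exact norm_le_norm_add_smul_inner (by linarith) _ _

theorem lipschitzWith_gSlist (w : List (Fin N)) :
    LipschitzWith (((N : ℝ≥0) / (N + 2)) ^ w.length) (gSlist N w) := by
  induction w with
  | nil => simpa [gSlist] using LipschitzWith.id
  | cons a w ih => simpa [gSlist, pow_succ'] using (lipschitzWith_gS a).comp ih

theorem antilipschitzWith_gSlist (w : List (Fin N)) :
    AntilipschitzWith ((N + 2) ^ w.length) (gSlist N w) := by
  induction w with
  | nil => simpa [gSlist] using AntilipschitzWith.id
  | cons a w ih => simpa [gSlist, pow_succ] using (antilipschitzWith_gS a).comp ih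

theorem mapsTo_gS {X : Set (E N)} (hX : X = ⋃ a, gS N a '' X) (a : Fin N) :
    MapsTo (gS N a) X X := fun x hx ↦ by
  rw [hX]
  exact mem_iUnion.2 ⟨a, mem_image_of_mem _ hx⟩

theorem mapsTo_gSlist {X : Set (E N)} (hX : X = ⋃ a, gS N a '' X) (w : List (Fin N)) :
    MapsTo (gSlist N w) X X := by
  induction w with
  | nil => exact mapsTo_id X
  | cons a w ih => exact (mapsTo_gS hX a).comp ih

theorem Fin.two_le_cast_of_ne {j k : Fin N} (hjk : j ≠ k) : (2 : ℝ) ≤ N := by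
  have := Fin.val_ne_of_ne hjk
  exact_mod_cast (by omega : 2 ≤ N)

/-- Coordinates on the plane through `0`, `p_j`, `p_k`, oriented so that the edge from `p_j` to
`p_k` becomes monotone: `(-1, 0) ↦ p_j` and `(0, 1) ↦ p_k`. -/
def edgePlane (N : ℕ) (j k : Fin N) (p : ℝ × ℝ) : E N := p.2 • gPt N k - p.1 • gPt N j

def edgeLeft (N : ℕ) (p : ℝ × ℝ) : ℝ × ℝ :=
  ((N * p.1 + p.2 - 2) / (N + 2), p.2 / (N + 2))

def edgeRight (N : ℕ) (p : ℝ × ℝ) : ℝ × ℝ :=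
  (p.1 / (N + 2), (N * p.2 + p.1 + 2) / (N + 2))

theorem gS_edgePlane_left {j k : Fin N} (hjk : j ≠ k) (p : ℝ × ℝ) :
    gS N j (edgePlane N j k p) = edgePlane N j k (edgeLeft N p) := by
  have hN := Fin.two_le_cast_of_ne hjk
  have hN1 : (N : ℝ) - 1 ≠ 0 := by linarith
  rw [gS, norm_gPt_sq]
  simp only [edgePlane, edgeLeft, inner_sub_left, real_inner_smul_left, inner_gPt, if_neg hjk.symm,
    if_true, smul_sub, smul_smul]
  match_scalars <;> field_simp; ring

theorem gS_edgePlane_right {j k : Fin N} (hjk : j ≠ k) (p : ℝ × ℝ) :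
    gS N k (edgePlane N j k p) = edgePlane N j k (edgeRight N p) := by
  have hN := Fin.two_le_cast_of_ne hjk
  have hN1 : (N : ℝ) - 1 ≠ 0 := by linarith
  rw [gS, norm_gPt_sq]
  simp only [edgePlane, edgeRight, inner_sub_left, real_inner_smul_left, inner_gPt, if_neg hjk,
    if_true, smul_sub, smul_smul]
  match_scalars <;> field_simp; ring

theorem continuous_edgePlane (j k : Fin N) : Continuous (edgePlane N j k) := by
  unfold edgePlane; fun_prop

theorem dist_edgePlane_le (j k : Fin N) (p q : ℝ × ℝ) :
    dist (edgePlane N j k p) (edgePlane N j k q) ≤ |p.1 - q.1| + |p.2 - q.2| := by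
  have hpq : edgePlane N j k p - edgePlane N j k q =
      (p.2 - q.2) • gPt N k - (p.1 - q.1) • gPt N j := by
    simp only [edgePlane, sub_smul]; abel
  rw [dist_eq_norm, hpq]
  calc ‖(p.2 - q.2) • gPt N k - (p.1 - q.1) • gPt N j‖
      ≤ |p.2 - q.2| * ‖gPt N k‖ + |p.1 - q.1| * ‖gPt N j‖ := by
        grw [norm_sub_le, norm_smul, norm_smul, Real.norm_eq_abs, Real.norm_eq_abs]
    _ ≤ |p.2 - q.2| * 1 + |p.1 - q.1| * 1 := by
        grw [norm_gPt_le_one k, norm_gPt_le_one j]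
    _ = _ := by ring

theorem monotone_edgeLeft (N : ℕ) : Monotone (edgeLeft N) := fun p q h ↦ by
  obtain ⟨h₁, h₂⟩ := h
  simp only [edgeLeft, Prod.mk_le_mk]
  constructor <;> gcongr

theorem monotone_edgeRight (N : ℕ) : Monotone (edgeRight N) := fun p q h ↦ by
  obtain ⟨h₁, h₂⟩ := h
  simp only [edgeRight, Prod.mk_le_mk]
  constructor <;> gcongr

theorem abs_natCast_mul_add_le (N : ℕ) (x y : ℝ) :
    |N * x + y| ≤ (N + 1) * max |x| |y| := by
  calc |N * x + y| ≤ N * |x| + |y| := by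
        grw [abs_add_le, abs_mul, Nat.abs_cast]
    _ ≤ N * max |x| |y| + max |x| |y| := by gcongr <;> simp
    _ = _ := by ring

theorem lipschitzWith_edgeLeft (N : ℕ) : LipschitzWith ((N + 1) / (N + 2)) (edgeLeft N) := by
  refine LipschitzWith.of_dist_le_mul fun p q ↦ ?_
  simp only [Prod.dist_eq, Real.dist_eq, edgeLeft, ← sub_div, abs_div]
  push_cast
  rw [abs_of_pos (by positivity : (0 : ℝ) < N + 2), div_mul_eq_mul_div]
  refine max_le (div_le_div_of_nonneg_right ?_ (by positivity))
    (div_le_div_of_nonneg_right ?_ (by positivity))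
  · rw [show (N : ℝ) * p.1 + p.2 - 2 - (N * q.1 + q.2 - 2) = N * (p.1 - q.1) + (p.2 - q.2) by ring]
    exact abs_natCast_mul_add_le N _ _
  · exact (le_max_right _ _).trans (le_mul_of_one_le_left (by positivity) (by simp))

theorem lipschitzWith_edgeRight (N : ℕ) : LipschitzWith ((N + 1) / (N + 2)) (edgeRight N) := by
  refine LipschitzWith.of_dist_le_mul fun p q ↦ ?_
  simp only [Prod.dist_eq, Real.dist_eq, edgeRight, ← sub_div, abs_div]
  push_cast
  rw [abs_of_pos (by positivity : (0 : ℝ) < N + 2), div_mul_eq_mul_div]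
  refine max_le (div_le_div_of_nonneg_right ?_ (by positivity))
    (div_le_div_of_nonneg_right ?_ (by positivity))
  · exact (le_max_left _ _).trans (le_mul_of_one_le_left (by positivity) (by simp))
  · rw [show (N : ℝ) * p.2 + p.1 + 2 - (N * q.2 + q.1 + 2) = N * (p.2 - q.2) + (p.1 - q.1) by ring,
      max_comm]
    exact abs_natCast_mul_add_le N _ _

theorem exists_monotone_edgeCurve (N : ℕ) :
    ∃ γ : Path ((-1 : ℝ), (0 : ℝ)) (0, 1), Monotone γ ∧
      ∀ t, ∃ s, γ t = edgeLeft N (γ s) ∨ γ t = edgeRight N (γ s) := by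
  have hK : ((N : ℝ≥0) + 1) / (N + 2) < 1 := (div_lt_one (by positivity)).2 (by gcongr; norm_num)
  have hN : (N : ℝ) + 2 ≠ 0 := by positivity
  have ha : edgeLeft N (-1, 0) = (-1, 0) := by
    ext <;> simp [edgeLeft]
    field_simp; ring
  have hb : edgeRight N (0, 1) = (0, 1) := by
    ext <;> simp [edgeRight, hN]
  have hab : edgeLeft N (0, 1) = edgeRight N (-1, 0) := by
    ext <;> simp [edgeLeft, edgeRight] <;> field_simp <;> ring
  let γ₀ : Path ((-1 : ℝ), (0 : ℝ)) (0, 1) :=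
    { toFun := fun t ↦ ((t : ℝ) - 1, t)
      source' := by simp
      target' := by simp }
  have hγ₀ : Monotone γ₀ := fun s t hst ↦ Prod.mk_le_mk.2 ⟨by simpa using hst, hst⟩
  obtain ⟨γ, hγ, hstep⟩ := Path.exists_monotone_selfSimilarStep_eq hK (lipschitzWith_edgeLeft N)
    (lipschitzWith_edgeRight N) (monotone_edgeLeft N) (monotone_edgeRight N) ha hb hab γ₀ hγ₀
  refine ⟨γ, hγ, fun t ↦ ?_⟩
  have h := Path.selfSimilarStep_apply (lipschitzWith_edgeLeft N).continuous
    (lipschitzWith_edgeRight N).continuous ha hb hab γ t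
  rw [hstep] at h
  rw [h]
  split_ifs
  exacts [⟨_, Or.inl rfl⟩, ⟨_, Or.inr rfl⟩]

section Attractor

variable {X : Set (E N)} (hXne : X.Nonempty) (hXc : IsCompact X)
  (hXinv : X = ⋃ a, gS N a '' X)
include hXne hXc hXinv

theorem edgePlane_mem {j k : Fin N} (hjk : j ≠ k) {γ : Path ((-1 : ℝ), (0 : ℝ)) (0, 1)}
    (hγ : ∀ t, ∃ s, γ t = edgeLeft N (γ s) ∨ γ t = edgeRight N (γ s)) (t : unitInterval) :
    edgePlane N j k (γ t) ∈ X := by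
  have hK : (N : ℝ≥0) / (N + 2) < 1 := (div_lt_one (by positivity)).2 (by simp)
  refine IsCompact.subset_of_subset_iUnion_image hK lipschitzWith_gS (mapsTo_gS hXinv) hXc hXne
    (isCompact_range ((continuous_edgePlane j k).comp γ.continuous)) ?_ ⟨t, rfl⟩
  rintro _ ⟨t, rfl⟩
  obtain ⟨s, hs | hs⟩ := hγ t
  · exact mem_iUnion.2 ⟨j, _, ⟨s, rfl⟩, by simp [hs, gS_edgePlane_left hjk]⟩
  · exact mem_iUnion.2 ⟨k, _, ⟨s, rfl⟩, by simp [hs, gS_edgePlane_right hjk]⟩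

theorem exists_path_gSlist_gPt (w : List (Fin N)) {j k : Fin N} (hjk : j ≠ k) :
    ∃ γ : ℝ → E N, ContinuousOn γ (Icc 0 1) ∧ γ '' Icc 0 1 ⊆ X ∧
      γ 0 = gSlist N w (gPt N j) ∧ γ 1 = gSlist N w (gPt N k) ∧
      eVariationOn γ (Icc 0 1) ≤ ENNReal.ofReal (2 * ((N : ℝ) / (N + 2)) ^ w.length) := by
  obtain ⟨c, hc, hself⟩ := exists_monotone_edgeCurve N
  have hmono : Monotone c.extend := Monotone.IccExtend _ hc
  have hLip := lipschitzWith_gSlist (N := N) w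
  set r : ℝ := (N : ℝ) / (N + 2)
  let V (t : ℝ) : ℝ := r ^ w.length * ((c.extend t).1 + (c.extend t).2)
  refine ⟨fun t ↦ gSlist N w (edgePlane N j k (c.extend t)),
    ((hLip.continuous.comp (continuous_edgePlane j k)).comp c.continuous_extend).continuousOn,
    ?_, by simp [edgePlane], by simp [edgePlane], ?_⟩
  · rintro _ ⟨t, ht, rfl⟩
    dsimp only
    rw [c.extend_apply ht]
    exact mapsTo_gSlist hXinv w (edgePlane_mem hXne hXc hXinv hjk hself _)
  calc _ ≤ ENNReal.ofReal (V 1 - V 0) := by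
        refine eVariationOn_Icc_le_of_dist_le_sub zero_le_one fun x _ y _ hxy ↦ ?_
        obtain ⟨h₁, h₂⟩ := hmono hxy
        calc _ ≤ r ^ w.length * dist (edgePlane N j k _) (edgePlane N j k _) := by
              simpa [r] using hLip.dist_le_mul _ _
          _ ≤ r ^ w.length * (|(c.extend x).1 - (c.extend y).1| +
                |(c.extend x).2 - (c.extend y).2|) := by
              gcongr; exact dist_edgePlane_le j k _ _
          _ = V y - V x := by
              rw [abs_of_nonpos (by linarith), abs_of_nonpos (by linarith)]; ring
    _ = ENNReal.ofReal (2 * r ^ w.length) := by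
        simp only [V, Path.extend_zero, Path.extend_one]; ring_nf

end Attractor

theorem cell_geodesic_bounds_general (N : ℕ)
    (X : Set (E N)) (hXne : X.Nonempty) (hXc : IsCompact X)
    (hXinv : X = ⋃ j : Fin N, gS N j '' X)
    (w : List (Fin N)) (j k : Fin N) (hjk : j < k) :
    (∃ γ : ℝ → E N,
      ContinuousOn γ (Icc (0 : ℝ) 1) ∧
      γ '' Icc (0 : ℝ) 1 ⊆ X ∧
      γ 0 = gSlist N w (gPt N j) ∧
      γ 1 = gSlist N w (gPt N k) ∧
      eVariationOn γ (Icc (0 : ℝ) 1) ≤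
        ENNReal.ofReal (2 * ((N : ℝ) / ((N : ℝ) + 2)) ^ w.length)) ∧
    ‖gSlist N w (gPt N j) - gSlist N w (gPt N k)‖ ≥ (((N : ℝ) + 2) ^ w.length)⁻¹ ∧
    ∀ σ : ℝ → E N, ContinuousOn σ (Icc (0 : ℝ) 1) → σ '' Icc (0 : ℝ) 1 ⊆ X →
      σ 0 = gSlist N w (gPt N j) → σ 1 = gSlist N w (gPt N k) →
      ENNReal.ofReal ((((N : ℝ) + 2) ^ w.length)⁻¹) ≤ eVariationOn σ (Icc (0 : ℝ) 1) := by
  have hsep : (((N : ℝ) + 2) ^ w.length)⁻¹ ≤ ‖gSlist N w (gPt N j) - gSlist N w (gPt N k)‖ := by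
    have h := (antilipschitzWith_gSlist w).le_mul_dist (gPt N j) (gPt N k)
    rw [dist_gPt hjk.ne, dist_eq_norm] at h
    push_cast at h
    exact (inv_le_iff_one_le_mul₀' (by positivity)).2 (by simpa using h)
  refine ⟨exists_path_gSlist_gPt hXne hXc hXinv w hjk.ne, hsep, fun σ _ _ h₀ h₁ ↦ ?_⟩
  calc ENNReal.ofReal (((N : ℝ) + 2) ^ w.length)⁻¹ ≤ edist (σ 0) (σ 1) := by
        rw [edist_dist, h₀, h₁, dist_eq_norm]; exact ENNReal.ofReal_le_ofReal hsep
    _ ≤ eVariationOn σ (Icc 0 1) :=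
        eVariationOn.edist_le σ (left_mem_Icc.2 zero_le_one) (right_mem_Icc.2 zero_le_one)

/-- quantitative form of Corollary 2.10: between the vertices
`S_w(p_j)` and `S_w(p_k)` of the cell `S_w(X)` there is a path in `X` of length
at most `2 (N/(N+2))^m`, and every such path has length at least `(N+2)^{-m}`. -/
theorem cell_geodesic_bounds (N : ℕ) (hN : 2 ≤ N)
    (X : Set (E N)) (hXne : X.Nonempty) (hXc : IsCompact X)
    (hXinv : X = ⋃ j : Fin N, gS N j '' X)
    (w : List (Fin N)) (j k : Fin N) (hjk : j < k) :
    (∃ γ : ℝ → E N,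
      ContinuousOn γ (Icc (0 : ℝ) 1) ∧
      γ '' Icc (0 : ℝ) 1 ⊆ X ∧
      γ 0 = gSlist N w (gPt N j) ∧
      γ 1 = gSlist N w (gPt N k) ∧
      eVariationOn γ (Icc (0 : ℝ) 1) ≤
        ENNReal.ofReal (2 * ((N : ℝ) / ((N : ℝ) + 2)) ^ w.length)) ∧
    ‖gSlist N w (gPt N j) - gSlist N w (gPt N k)‖ ≥ (((N : ℝ) + 2) ^ w.length)⁻¹ ∧
    ∀ σ : ℝ → E N, ContinuousOn σ (Icc (0 : ℝ) 1) → σ '' Icc (0 : ℝ) 1 ⊆ X →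
      σ 0 = gSlist N w (gPt N j) → σ 1 = gSlist N w (gPt N k) →
      ENNReal.ofReal ((((N : ℝ) + 2) ^ w.length)⁻¹) ≤ eVariationOn σ (Icc (0 : ℝ) 1) :=
  cell_geodesic_bounds_general N X hXne hXc hXinv w j k hjk
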